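/- arXiv:1506.06715 — 4 statements merged into one kernel-verified Lean document; each statement's English description precedes it below -/
import Mathlib

section
/- Let f be a non-negative monotone submodular set function on a finite ground set N with f(∅) = 0, let k ≥ 1 and β > 0, and let ALG be a β-nice algorithm for f with output size bound k' = k. Under a random partition of N into m parts (m ≥ 1), 𝔼[ f_k( ALG(T_1) ∪ … ∪ ALG(T_m) ) ] ≥ (1/(2+β))·f_k(N). (That is, any β-nice algorithm is a 1/(2+β)-approximate randomized composable core-set of size k and multiplicity 1 for monotone submodular maximization with cardinality constraint k.) -/
/-!
Fix an optimal `O` (`#O ≤ k`) and a part `i₀`, and call `x` *rejected* by a partition when `ALG`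
discards `x` once `x` is added to `T_{i₀}`. Niceness says that adding a rejected element does
not change `ALG (T_{i₀})` and has marginal value at most `β f(ALG T_{i₀}) / k` over it, so by
submodularity `f(O ∩ rejected) ≤ (1 + β) f(ALG T_{i₀})`; together with `f(O ∩ ⋃ ALG T_i)` this
is at most `(2 + β) f_k(⋃ ALG T_i)`. On the other hand, relabelling the parts shows that, over all
assignments `g`, each `x` is selected into `⋃ ALG T_i` or rejected exactly `m ^ |N|` times in
total; adding up the marginals of `O` in any order then gives
`∑_g f(O ∩ ⋃ ALG T_i) + f(O ∩ rejected) ≥ m ^ |N| f(O)`.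
-/

open Finset

/-- The part of a random partition: `T_i(g) = {x : g x = i}`. -/
def part {α : Type*} [Fintype α] [DecidableEq α] {m : ℕ} (g : α → Fin m) (i : Fin m) :
    Finset α :=
  Finset.univ.filter fun a => g a = i

/-- `f_k(S) = max { f(S') : S' ⊆ S, |S'| ≤ k }`. -/
noncomputable def fk {α : Type*} [DecidableEq α] (f : Finset α → ℝ) (k : ℕ)
    (S : Finset α) : ℝ :=
  (S.powerset.filter fun S' => S'.card ≤ k).sup'
    ⟨∅, by simp⟩ f

def IsSubmodular {α : Type*} [DecidableEq α] (f : Finset α → ℝ) : Prop :=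
  ∀ X Y : Finset α, X ⊆ Y → ∀ x, x ∉ Y → f (insert x Y) - f Y ≤ f (insert x X) - f X

namespace IsSubmodular

variable {α : Type*} [DecidableEq α] {f : Finset α → ℝ}

theorem sub_le_sum_marginal (hf : IsSubmodular f) (A D : Finset α) :
    f (A ∪ D) - f A ≤ ∑ y ∈ D, (f (insert y A) - f A) := by
  induction D using Finset.induction_on with
  | empty => simp
  | @insert y D hy ih =>
    rw [sum_insert hy, union_insert]
    by_cases hyA : y ∈ A
    · rw [insert_eq_of_mem (mem_union_left D hyA), insert_eq_of_mem hyA]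
      linarith
    · have := hf A (A ∪ D) subset_union_left y (by simp [hyA, hy])
      linarith

theorem add_marginal_le_insert_inter (hf : IsSubmodular f) {O : Finset α} {x : α} (hx : x ∉ O)
    (B : Finset α) :
    f (O ∩ B) + (if x ∈ B then f (insert x O) - f O else 0) ≤ f (insert x O ∩ B) := by
  by_cases hxB : x ∈ B
  · rw [if_pos hxB, insert_inter_of_mem hxB]
    linarith [hf (O ∩ B) O inter_subset_left x hx]
  · rw [if_neg hxB, insert_inter_of_notMem hxB, add_zero]

theorem card_mul_le_sum_inter {ι : Type*} [Fintype ι] (hf : IsSubmodular f) (hmono : Monotone f)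
    (hempty : f ∅ = 0) (B : ι → Finset α) (N : ℕ) (O : Finset α)
    (hcover : ∀ x ∈ O, N ≤ #{j | x ∈ B j}) :
    N * f O ≤ ∑ j, f (O ∩ B j) := by
  induction O using Finset.induction_on with
  | empty => simp [hempty]
  | @insert x O hx ih =>
    set Δ := f (insert x O) - f O
    have hΔ : 0 ≤ Δ := sub_nonneg.2 (hmono (subset_insert x O))
    have hN : (N : ℝ) ≤ #{j | x ∈ B j} := by exact_mod_cast hcover x (mem_insert_self x O)
    have hcount : ∑ j, (if x ∈ B j then Δ else 0) = #{j | x ∈ B j} * Δ := by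
      rw [sum_ite, sum_const_zero, add_zero, sum_const, nsmul_eq_mul]
    calc N * f (insert x O) = N * f O + N * Δ := by ring
      _ ≤ ∑ j, f (O ∩ B j) + #{j | x ∈ B j} * Δ :=
        add_le_add (ih fun y hy => hcover y (mem_insert_of_mem hy))
          (mul_le_mul_of_nonneg_right hN hΔ)
      _ = ∑ j, (f (O ∩ B j) + if x ∈ B j then Δ else 0) := by rw [sum_add_distrib, hcount]
      _ ≤ ∑ j, f (insert x O ∩ B j) :=
        sum_le_sum fun j _ => hf.add_marginal_le_insert_inter hx (B j)

end IsSubmodular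

section Truncation

variable {α : Type*} [DecidableEq α] (f : Finset α → ℝ) (k : ℕ)

theorem le_fk {S C : Finset α} (hCS : C ⊆ S) (hC : #C ≤ k) : f C ≤ fk f k S :=
  le_sup' f (by simpa using ⟨hCS, hC⟩)

theorem exists_eq_fk (S : Finset α) : ∃ C ⊆ S, #C ≤ k ∧ fk f k S = f C := by
  obtain ⟨C, hC, hval⟩ :=
    exists_mem_eq_sup' (⟨∅, by simp⟩ : {S' ∈ S.powerset | #S' ≤ k}.Nonempty) f
  rw [mem_filter, mem_powerset] at hC
  exact ⟨C, hC.1, hC.2, hval⟩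

end Truncation

section NiceAlgorithm

variable {α : Type*} [DecidableEq α] {ALG : Finset α → Finset α}

def rejected [Fintype α] (ALG : Finset α → Finset α) (T : Finset α) : Finset α :=
  {a | a ∉ ALG (insert a T)}

theorem alg_insert_eq_of_notMem
    (hind : ∀ T : Finset α, ∀ x ∈ T \ ALG T, ALG (T.erase x) = ALG T)
    {T : Finset α} {y : α} (hy : y ∉ ALG (insert y T)) : ALG (insert y T) = ALG T := by
  by_cases hyT : y ∈ T
  · rw [insert_eq_of_mem hyT]
  · simpa [erase_insert hyT] using (hind (insert y T) y (by simp [hy])).symm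

theorem marginal_le_of_notMem_alg_insert {f : Finset α → ℝ} {k : ℕ} {β : ℝ}
    (hind : ∀ T : Finset α, ∀ x ∈ T \ ALG T, ALG (T.erase x) = ALG T)
    (hmarg : ∀ T : Finset α, ∀ x ∈ T \ ALG T,
      f (insert x (ALG T)) - f (ALG T) ≤ β * f (ALG T) / k)
    {T : Finset α} {y : α} (hy : y ∉ ALG (insert y T)) :
    f (insert y (ALG T)) - f (ALG T) ≤ β * f (ALG T) / k := by
  simpa [alg_insert_eq_of_notMem hind hy] using hmarg (insert y T) y (by simp [hy])

theorem inter_rejected_le [Fintype α] {f : Finset α → ℝ} {k : ℕ} {β : ℝ}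
    (hf : IsSubmodular f) (hmono : Monotone f) (hempty : f ∅ = 0) (hβ : 0 ≤ β)
    (hind : ∀ T : Finset α, ∀ x ∈ T \ ALG T, ALG (T.erase x) = ALG T)
    (hmarg : ∀ T : Finset α, ∀ x ∈ T \ ALG T,
      f (insert x (ALG T)) - f (ALG T) ≤ β * f (ALG T) / k)
    {O : Finset α} (hO : #O ≤ k) (T : Finset α) :
    f (O ∩ rejected ALG T) ≤ (1 + β) * f (ALG T) := by
  set A := ALG T
  set R := O ∩ rejected ALG T
  have hA : 0 ≤ f A := hempty ▸ hmono (empty_subset A)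
  have hsum : ∑ y ∈ R, (f (insert y A) - f A) ≤ #R * (β * f A / k) := by
    rw [← nsmul_eq_mul]
    refine sum_le_card_nsmul R _ _ fun y hy => marginal_le_of_notMem_alg_insert hind hmarg ?_
    simpa [R, rejected] using (mem_inter.1 hy).2
  have hR : (#R : ℝ) * (β * f A / k) ≤ β * f A := by
    have hRk : #R ≤ k := (card_le_card inter_subset_left).trans hO
    rcases k.eq_zero_or_pos with rfl | hk
    · simp [Nat.le_zero.1 hRk, mul_nonneg hβ hA]
    · calc (#R : ℝ) * (β * f A / k) ≤ k * (β * f A / k) := by gcongr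
        _ = β * f A := by field_simp
  calc f R ≤ f (A ∪ R) := hmono subset_union_right
    _ ≤ f A + β * f A := by linarith [hf.sub_le_sum_marginal A R]
    _ = (1 + β) * f A := by ring

end NiceAlgorithm

section RandomPartition

variable {α : Type*} [DecidableEq α] {m : ℕ}

/-- Moves `x`'s part to index `i₀` by swapping the labels `i₀` and `g x`, but keeps `g x` at `x`
itself, which makes the map an involution. -/
def relabel (i₀ : Fin m) (x : α) (g : α → Fin m) : α → Fin m :=
  fun a => if a = x then g x else Equiv.swap i₀ (g x) (g a)

theorem relabel_involutive (i₀ : Fin m) (x : α) : Function.Involutive (relabel i₀ x) := by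
  intro g
  funext a
  by_cases hax : a = x <;> simp [relabel, hax]

variable [Fintype α] {ALG : Finset α → Finset α}

@[simp]
theorem mem_part {g : α → Fin m} {i : Fin m} {a : α} : a ∈ part g i ↔ g a = i := by
  simp [part]

def coreUnion (ALG : Finset α → Finset α) (g : α → Fin m) : Finset α :=
  univ.biUnion fun i => ALG (part g i)

theorem mem_coreUnion_iff (hsub : ∀ T, ALG T ⊆ T) {g : α → Fin m} {x : α} :
    x ∈ coreUnion ALG g ↔ x ∈ ALG (part g (g x)) := by
  refine ⟨fun h => ?_, fun h => mem_biUnion.2 ⟨g x, mem_univ _, h⟩⟩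
  obtain ⟨i, -, hi⟩ := mem_biUnion.1 h
  rwa [mem_part.1 (hsub _ hi)]

theorem insert_part_relabel (i₀ : Fin m) (x : α) (g : α → Fin m) :
    insert x (part (relabel i₀ x g) i₀) = part g (g x) := by
  ext a
  by_cases hax : a = x
  · simp [hax]
  · simp [relabel, hax, Equiv.swap_apply_eq_iff]

theorem card_mem_coreUnion_add_card_mem_rejected (hsub : ∀ T, ALG T ⊆ T) (i₀ : Fin m) (x : α) :
    #{g : α → Fin m | x ∈ coreUnion ALG g} +
      #{g : α → Fin m | x ∈ rejected ALG (part g i₀)} = m ^ Fintype.card α := by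
  have hselected : #{g : α → Fin m | x ∈ coreUnion ALG g} =
      #{g : α → Fin m | x ∉ rejected ALG (part g i₀)} :=
    card_equiv (relabel_involutive i₀ x).toPerm fun g => by
      simp [mem_coreUnion_iff hsub, rejected, insert_part_relabel]
  rw [hselected, add_comm, card_filter_add_card_filter_not, card_univ, Fintype.card_fun,
    Fintype.card_fin]

theorem pow_mul_le_sum_inter_coreUnion_add_inter_rejected {f : Finset α → ℝ}
    (hf : IsSubmodular f) (hmono : Monotone f) (hempty : f ∅ = 0) (hsub : ∀ T, ALG T ⊆ T)
    (i₀ : Fin m) (O : Finset α) :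
    (m : ℝ) ^ Fintype.card α * f O ≤
      ∑ g : α → Fin m, (f (O ∩ coreUnion ALG g) + f (O ∩ rejected ALG (part g i₀))) := by
  have hcover : ∀ x ∈ O, m ^ Fintype.card α ≤
      #{j | x ∈ Sum.elim (coreUnion (m := m) ALG) (fun g => rejected ALG (part g i₀)) j} := by
    intro x _
    rw [← card_mem_coreUnion_add_card_mem_rejected hsub i₀ x]
    simp only [card_filter, Fintype.sum_sum_type, Sum.elim_inl, Sum.elim_inr]
    exact le_rfl
  simpa [Fintype.sum_sum_type, sum_add_distrib] using
    hf.card_mul_le_sum_inter hmono hempty _ _ O hcover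

theorem inter_coreUnion_add_inter_rejected_le {f : Finset α → ℝ} {k : ℕ} {β : ℝ}
    (hf : IsSubmodular f) (hmono : Monotone f) (hempty : f ∅ = 0) (hβ : 0 ≤ β)
    (hcard : ∀ T, #(ALG T) ≤ k)
    (hind : ∀ T : Finset α, ∀ x ∈ T \ ALG T, ALG (T.erase x) = ALG T)
    (hmarg : ∀ T : Finset α, ∀ x ∈ T \ ALG T,
      f (insert x (ALG T)) - f (ALG T) ≤ β * f (ALG T) / k)
    {O : Finset α} (hO : #O ≤ k) (i₀ : Fin m) (g : α → Fin m) :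
    f (O ∩ coreUnion ALG g) + f (O ∩ rejected ALG (part g i₀)) ≤
      (2 + β) * fk f k (coreUnion ALG g) := by
  have hselected : f (O ∩ coreUnion ALG g) ≤ fk f k (coreUnion ALG g) :=
    le_fk f k inter_subset_right ((card_le_card inter_subset_left).trans hO)
  have hpart : f (ALG (part g i₀)) ≤ fk f k (coreUnion ALG g) :=
    le_fk f k (subset_biUnion_of_mem (fun i => ALG (part g i)) (mem_univ i₀)) (hcard _)
  have hrejected := inter_rejected_le hf hmono hempty hβ hind hmarg hO (part g i₀)
  nlinarith

end RandomPartition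

theorem stmt_5_general {α : Type*} [DecidableEq α] [Fintype α] {m : ℕ} (hm : 1 ≤ m)
    (f : Finset α → ℝ)
    (hsub : ∀ X Y : Finset α, X ⊆ Y → ∀ x, x ∉ Y →
      f (insert x Y) - f Y ≤ f (insert x X) - f X)
    (hmono : ∀ X Y : Finset α, X ⊆ Y → f X ≤ f Y)
    (hempty : f ∅ = 0)
    (k : ℕ) (β : ℝ) (hβ : 0 < β)
    (ALG : Finset α → Finset α)
    (hALGsub : ∀ T, ALG T ⊆ T)
    (hALGcard : ∀ T, (ALG T).card ≤ k)
    (hALGind : ∀ T : Finset α, ∀ x ∈ T \ ALG T, ALG (T.erase x) = ALG T)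
    (hALGmarg : ∀ T : Finset α, ∀ x ∈ T \ ALG T,
      f (insert x (ALG T)) - f (ALG T) ≤ β * f (ALG T) / k) :
    (∑ g : α → Fin m, fk f k (Finset.univ.biUnion fun i => ALG (part g i))) /
        (m : ℝ) ^ Fintype.card α
      ≥ (1 / (2 + β)) * fk f k Finset.univ := by
  obtain ⟨O, -, hOk, hO⟩ := exists_eq_fk f k univ
  let i₀ : Fin m := ⟨0, hm⟩
  have hmono' : Monotone f := fun X Y => hmono X Y
  have hsum : (m : ℝ) ^ Fintype.card α * f O ≤
      (2 + β) * ∑ g : α → Fin m, fk f k (coreUnion ALG g) :=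
    calc (m : ℝ) ^ Fintype.card α * f O
        ≤ ∑ g : α → Fin m, (f (O ∩ coreUnion ALG g) + f (O ∩ rejected ALG (part g i₀))) :=
          pow_mul_le_sum_inter_coreUnion_add_inter_rejected hsub hmono' hempty hALGsub i₀ O
      _ ≤ ∑ g : α → Fin m, (2 + β) * fk f k (coreUnion ALG g) :=
          sum_le_sum fun g _ => inter_coreUnion_add_inter_rejected_le hsub hmono' hempty hβ.le
            hALGcard hALGind hALGmarg hOk i₀ g
      _ = (2 + β) * ∑ g : α → Fin m, fk f k (coreUnion ALG g) := (mul_sum ..).symm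
  have hpow : (0 : ℝ) < (m : ℝ) ^ Fintype.card α := pow_pos (by exact_mod_cast hm) _
  rw [ge_iff_le, hO, one_div_mul_eq_div, div_le_div_iff₀ (by linarith) hpow]
  unfold coreUnion at hsum
  linarith

/-- any β-nice algorithm with output size `k` is a `1/(2+β)`-approximate
randomized composable core-set (multiplicity 1) for monotone submodular maximization with
cardinality constraint `k`. -/
theorem stmt_5 {α : Type*} [DecidableEq α] [Fintype α] {m : ℕ} (hm : 1 ≤ m)
    (f : Finset α → ℝ)
    (hsub : ∀ X Y : Finset α, X ⊆ Y → ∀ x, x ∉ Y →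
      f (insert x Y) - f Y ≤ f (insert x X) - f X)
    (hmono : ∀ X Y : Finset α, X ⊆ Y → f X ≤ f Y)
    (hnonneg : ∀ S : Finset α, 0 ≤ f S)
    (hempty : f ∅ = 0)
    (k : ℕ) (hk : 1 ≤ k) (β : ℝ) (hβ : 0 < β)
    (ALG : Finset α → Finset α)
    (hALGsub : ∀ T, ALG T ⊆ T)
    (hALGcard : ∀ T, (ALG T).card ≤ k)
    (hALGind : ∀ T : Finset α, ∀ x ∈ T \ ALG T, ALG (T.erase x) = ALG T)
    (hALGmarg : ∀ T : Finset α, ∀ x ∈ T \ ALG T,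
      f (insert x (ALG T)) - f (ALG T) ≤ β * f (ALG T) / k) :
    (∑ g : α → Fin m, fk f k (Finset.univ.biUnion fun i => ALG (part g i))) /
        (m : ℝ) ^ Fintype.card α
      ≥ (1 / (2 + β)) * fk f k Finset.univ :=
  stmt_5_general hm f hsub hmono hempty k β hβ ALG hALGsub hALGcard hALGind hALGmarg
end

section
/- Let f be a monotone submodular set function on a finite ground set with f(∅) = 0. Let O₁ ⊆ OPT' be finite sets, let π be a linear order on OPT' in which every element of O₁ precedes every element of OPT' \ O₁, let y_1, …, y_M be distinct elements, let S^j := {y_1, …, y_j} (with S^0 = ∅), and let J ⊆ {1, …, M}. Then f( O₁ ∪ {y_j : j ∈ J} ) ≥ Σ_{x ∈ O₁} Δ(x, π^x) + Σ_{j ∈ J} Δ( y_j, OPT' ∪ S^{j−1} ), where π^x denotes the set of elements of OPT' preceding x in π. -/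
/-! The marginals of `O₁` along `π` only see earlier elements of `O₁`, since `O₁` is an initial
segment of `π`; so they telescope to `f O₁`. Each further marginal `Δ(y_j, OPT' ∪ S^{j-1})` is at
most the marginal of `y_j` over the smaller set `O₁ ∪ {y_i : i ∈ J, i < j}`, and these telescope
to `f (O₁ ∪ {y_j : j ∈ J}) - f O₁`. -/

open Finset

section Marginals

variable {α : Type*} [DecidableEq α] (f : Finset α → ℝ)

theorem sum_marginal_filter_rank_lt {β : Type*} [LinearOrder β] (rank : α → β) (S : Finset α)
    (hS : Set.InjOn rank S) :
    ∑ x ∈ S, (f (insert x {z ∈ S | rank z < rank x}) - f {z ∈ S | rank z < rank x}) =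
      f S - f ∅ := by
  induction S using Finset.induction_on_max_value rank with
  | empty => simp
  | insert a s ha hmax ih =>
    have hS' : Set.InjOn rank s := hS.mono (by simp)
    have hlt : ∀ x ∈ s, rank x < rank a := fun x hx =>
      (hmax x hx).lt_of_ne fun h => ha (hS (by simp [hx]) (by simp) h ▸ hx)
    have hfilter_a : {z ∈ insert a s | rank z < rank a} = s := by
      rw [filter_insert, if_neg (lt_irrefl _), filter_true_of_mem hlt]
    have hfilter : ∀ x ∈ s, {z ∈ insert a s | rank z < rank x} = {z ∈ s | rank z < rank x} :=
      fun x hx => by rw [filter_insert, if_neg (hlt x hx).not_gt]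
    rw [sum_insert ha, hfilter_a, sum_congr rfl fun x hx => by rw [hfilter x hx], ih hS']
    ring

theorem marginal_le_marginal_of_subset
    (hsub : ∀ X Y : Finset α, X ⊆ Y → ∀ x, x ∉ Y →
      f (insert x Y) - f Y ≤ f (insert x X) - f X)
    (hmono : ∀ X Y : Finset α, X ⊆ Y → f X ≤ f Y)
    {X Y : Finset α} (hXY : X ⊆ Y) (x : α) :
    f (insert x Y) - f Y ≤ f (insert x X) - f X := by
  by_cases hx : x ∈ Y
  · rw [insert_eq_of_mem hx, sub_self, sub_nonneg]
    exact hmono _ _ (subset_insert x X)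
  · exact hsub X Y hXY x hx

theorem sum_marginal_union_prefix_le
    (hsub : ∀ X Y : Finset α, X ⊆ Y → ∀ x, x ∉ Y →
      f (insert x Y) - f Y ≤ f (insert x X) - f X)
    (hmono : ∀ X Y : Finset α, X ⊆ Y → f X ≤ f Y)
    {ι : Type*} [LinearOrder ι] [Fintype ι] (y : ι → α) {A B : Finset α} (hAB : A ⊆ B)
    (J : Finset ι) :
    ∑ j ∈ J, (f (insert (y j) (B ∪ (univ.filter (· < j)).image y)) - f (B ∪ (univ.filter (· < j)).image y)) ≤
      f (A ∪ J.image y) - f A := by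
  induction J using Finset.induction_on_max with
  | empty => simp
  | insert a s hlt ih =>
    have hprefix : A ∪ s.image y ⊆ B ∪ (univ.filter (· < a)).image y :=
      union_subset_union hAB (image_subset_image fun i hi => by simpa using hlt i hi)
    have hstep := marginal_le_marginal_of_subset f hsub hmono hprefix (y a)
    rw [sum_insert fun ha => lt_irrefl a (hlt a ha), image_insert, union_insert]
    linarith

end Marginals

theorem filter_rank_lt_eq_of_isInitialSegment {α β : Type*} [DecidableEq α] [LinearOrder β] {rank : α → β}
    {O₁ OPT' : Finset α} (hO : O₁ ⊆ OPT') (horder : ∀ x ∈ O₁, ∀ y ∈ OPT' \ O₁, rank x < rank y)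
    {x : α} (hx : x ∈ O₁) :
    {z ∈ OPT' | rank z < rank x} = {z ∈ O₁ | rank z < rank x} := by
  ext z
  simp only [mem_filter]
  refine ⟨fun ⟨hz, hzx⟩ => ⟨?_, hzx⟩, fun ⟨hz, hzx⟩ => ⟨hO hz, hzx⟩⟩
  by_contra hzO
  exact lt_asymm hzx (horder x hx z (mem_sdiff.mpr ⟨hz, hzO⟩))

theorem stmt_11_general {α : Type*} [DecidableEq α]
    (f : Finset α → ℝ)
    (hsub : ∀ X Y : Finset α, X ⊆ Y → ∀ x, x ∉ Y →
      f (insert x Y) - f Y ≤ f (insert x X) - f X)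
    (hmono : ∀ X Y : Finset α, X ⊆ Y → f X ≤ f Y)
    (hempty : f ∅ = 0)
    (O₁ OPT' : Finset α) (hO : O₁ ⊆ OPT')
    (rank : α → ℕ)
    (hrank : ∀ x ∈ OPT', ∀ y ∈ OPT', rank x = rank y → x = y)
    (horder : ∀ x ∈ O₁, ∀ y ∈ OPT' \ O₁, rank x < rank y)
    (M : ℕ) (y : Fin M → α)
    (J : Finset (Fin M)) :
    f (O₁ ∪ J.image y) ≥
      (∑ x ∈ O₁,
          (f (insert x (OPT'.filter fun z => rank z < rank x)) -
            f (OPT'.filter fun z => rank z < rank x))) +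
      ∑ j ∈ J,
        (f (insert (y j) (OPT' ∪ (Finset.univ.filter fun i : Fin M => i < j).image y)) -
          f (OPT' ∪ (Finset.univ.filter fun i : Fin M => i < j).image y)) := by
  have hO₁ : ∑ x ∈ O₁, (f (insert x {z ∈ OPT' | rank z < rank x}) -
      f {z ∈ OPT' | rank z < rank x}) = f O₁ := by
    rw [sum_congr rfl fun x hx => by rw [filter_rank_lt_eq_of_isInitialSegment hO horder hx],
      sum_marginal_filter_rank_lt f rank O₁ fun a ha b hb => hrank a (hO ha) b (hO hb),
      hempty, sub_zero]
  have hJ := sum_marginal_union_prefix_le f hsub hmono y hO J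
  rw [ge_iff_le, hO₁]
  linarith

/-- for monotone submodular `f` with `f(∅)=0`, sets `O₁ ⊆ OPT'` where the
linear order `π` on `OPT'` (encoded by an injective rank function) puts all of `O₁` before
`OPT' \ O₁`, distinct elements `y_1,…,y_M` with prefixes `S^j = {y_1,…,y_j}`, and any
`J ⊆ {1,…,M}`:
`f(O₁ ∪ {y_j : j ∈ J}) ≥ Σ_{x ∈ O₁} Δ(x, π^x) + Σ_{j ∈ J} Δ(y_j, OPT' ∪ S^{j−1})`. -/
theorem stmt_11 {α : Type*} [DecidableEq α] [Fintype α]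
    (f : Finset α → ℝ)
    (hsub : ∀ X Y : Finset α, X ⊆ Y → ∀ x, x ∉ Y →
      f (insert x Y) - f Y ≤ f (insert x X) - f X)
    (hmono : ∀ X Y : Finset α, X ⊆ Y → f X ≤ f Y)
    (hempty : f ∅ = 0)
    (O₁ OPT' : Finset α) (hO : O₁ ⊆ OPT')
    (rank : α → ℕ)
    (hrank : ∀ x ∈ OPT', ∀ y ∈ OPT', rank x = rank y → x = y)
    (horder : ∀ x ∈ O₁, ∀ y ∈ OPT' \ O₁, rank x < rank y)
    (M : ℕ) (y : Fin M → α) (hy : Function.Injective y)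
    (J : Finset (Fin M)) :
    f (O₁ ∪ J.image y) ≥
      (∑ x ∈ O₁,
          (f (insert x (OPT'.filter fun z => rank z < rank x)) -
            f (OPT'.filter fun z => rank z < rank x))) +
      ∑ j ∈ J,
        (f (insert (y j) (OPT' ∪ (Finset.univ.filter fun i : Fin M => i < j).image y)) -
          f (OPT' ∪ (Finset.univ.filter fun i : Fin M => i < j).image y)) :=
  stmt_11_general f hsub hmono hempty O₁ OPT' hO rank hrank horder M y J
end

section
/- There is an absolute constant c₀ > 0 with the following property. Let k ≥ 1 and 1 ≤ k₂ ≤ k be integers and set M := ⌈(2√2 + 1)·k⌉. Suppose reals β, α and reals a_j, b_j, c_j for 1 ≤ j ≤ M satisfy: (1) β ≥ 1 − α + Σ_{j ∈ J} (a_j + c_j) for every J ⊆ {1,…,M} with |J| = k₂; (2) a_j + b_j + c_j ≥ (α − Σ_{j'=1}^{j−1} a_{j'})/k₂ for all 1 ≤ j ≤ M; (3) Σ_{j=1}^{M} b_j ≤ 1 − α; (4) 0 ≤ α ≤ 1 and 0 ≤ a_j, b_j, c_j ≤ 1 for all j; (5) β ≥ Σ_{j=1}^{k} (a_j + b_j +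 c_j); (6) a_j + b_j + c_j ≥ a_{j+1} + b_{j+1} + c_{j+1} for all 1 ≤ j < M. Then β ≥ 2 − √2 − c₀/k. -/
open Finset

/-- `M = ⌈(2√2 + 1)·k⌉`, the number of items selected by greedy in the core-set. -/
noncomputable def lpM (k : ℕ) : ℕ := ⌈(2 * Real.sqrt 2 + 1) * (k : ℝ)⌉₊

/-- Feasibility for the factor-revealing linear program `LP^{k,k₂}`. -/
noncomputable def LPFeasible (k k₂ : ℕ) (β α : ℝ) (a b c : ℕ → ℝ) : Prop :=
  (∀ J ⊆ Finset.Icc 1 (lpM k), J.card = k₂ →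
      β ≥ 1 - α + ∑ j ∈ J, (a j + c j)) ∧
  (∀ j ∈ Finset.Icc 1 (lpM k),
      a j + b j + c j ≥ (α - ∑ j' ∈ Finset.Icc 1 (j - 1), a j') / (k₂ : ℝ)) ∧
  (∑ j ∈ Finset.Icc 1 (lpM k), b j ≤ 1 - α) ∧
  (0 ≤ α ∧ α ≤ 1) ∧
  (∀ j ∈ Finset.Icc 1 (lpM k),
      0 ≤ a j ∧ a j ≤ 1 ∧ 0 ≤ b j ∧ b j ≤ 1 ∧ 0 ≤ c j ∧ c j ≤ 1) ∧
  (β ≥ ∑ j ∈ Finset.Icc 1 k, (a j + b j + c j)) ∧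
  (∀ j, 1 ≤ j → j < lpM k →
      a j + b j + c j ≥ a (j + 1) + b (j + 1) + c (j + 1))

/-!
Write `ψ j = a j + c j` and `γ = β - 1 + α`, so that (1) says that every `k₂`-subset of the items
has `ψ`-mass at most `γ`. Summing (2) over the first `N` items against (3) gives
`N α - ∑ (N + k₂ - j) ψ j ≤ k₂ (1 - α)`. Once `2 k₂ (k₂ - 1) ≤ N (N - 1)`, the weights
`N + k₂ - j`, rescaled, form a fractional `k₂`-subset, so the weighted sum is at most
`N (2 k₂ + N - 1) γ / (2 k₂)`. The choice `N = ⌈√2 k₂⌉` then yields `γ ≥ α + 1 - √2`, that is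
`β ≥ 2 - √2` with no loss in `k`; for `α ≤ √2 - 1` the bound `γ ≥ 0` already suffices.
-/

section TopSubset

variable {ι : Type*} [DecidableEq ι]

theorem Finset.exists_subset_card_eq_forall_mem_sdiff_le {s : Finset ι} {K : ℕ}
    (hKs : K ≤ s.card) (ψ : ι → ℝ) :
    ∃ J ⊆ s, J.card = K ∧ ∀ i ∈ J, ∀ l ∈ s \ J, ψ l ≤ ψ i := by
  obtain ⟨J, hJ, hmax⟩ := (s.powersetCard K).exists_max_image (fun J => ∑ j ∈ J, ψ j)
    (powersetCard_nonempty.2 hKs)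
  obtain ⟨hJs, hJK⟩ := mem_powersetCard.1 hJ
  refine ⟨J, hJs, hJK, fun i hi l hl => ?_⟩
  obtain ⟨hls, hlJ⟩ := mem_sdiff.1 hl
  have hl' : l ∉ J.erase i := fun h => hlJ (mem_of_mem_erase h)
  have hswap : insert l (J.erase i) ∈ s.powersetCard K := by
    refine mem_powersetCard.2 ⟨insert_subset hls ((erase_subset i J).trans hJs), ?_⟩
    rw [card_insert_of_notMem hl', card_erase_of_mem hi, hJK]
    have : 0 < K := hJK ▸ card_pos.2 ⟨i, hi⟩
    omega
  have := hmax _ hswap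
  rw [sum_insert hl', ← add_sum_erase J ψ hi] at this
  linarith

/-- The fractional `K`-subset `K • w / ∑ w` of `s` has `ψ`-mass at most `γ`: compare it with a
top-`K` subset `J`, whose minimum `τ` separates the values of `ψ` inside and outside `J`. -/
theorem Finset.mul_sum_mul_le_sum_mul_of_forall_card_eq {s : Finset ι} {K : ℕ} (hK : 0 < K)
    (hKs : K ≤ s.card) {w ψ : ι → ℝ} {γ : ℝ} (hw0 : ∀ i ∈ s, 0 ≤ w i) (hw : ∀ i ∈ s, K * w i ≤ ∑ j ∈ s, w j)
    (hγ : ∀ J ⊆ s, J.card = K → ∑ j ∈ J, ψ j ≤ γ) :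
    K * ∑ i ∈ s, w i * ψ i ≤ (∑ i ∈ s, w i) * γ := by
  obtain ⟨J, hJs, hJK, hJψ⟩ := exists_subset_card_eq_forall_mem_sdiff_le hKs ψ
  have hJ : J.Nonempty := card_pos.1 (hJK ▸ hK)
  set W := ∑ i ∈ s, w i
  set τ := J.inf' hJ ψ
  have hJw : ∑ i ∈ J, (W - K * w i) = K * W - K * ∑ i ∈ J, w i := by
    rw [sum_sub_distrib, sum_const, hJK, nsmul_eq_mul, ← mul_sum]
  have hin : ∑ i ∈ J, K * w i * ψ i ≤ W * ∑ i ∈ J, ψ i - τ * (K * W - K * ∑ i ∈ J, w i) := by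
    rw [← hJw, mul_sum, mul_sum, ← sum_sub_distrib]
    gcongr with i hi
    nlinarith [hw i (hJs hi), inf'_le ψ hi]
  have hout : ∑ l ∈ s \ J, K * w l * ψ l ≤ τ * (K * W - K * ∑ i ∈ J, w i) := calc
    ∑ l ∈ s \ J, K * w l * ψ l ≤ ∑ l ∈ s \ J, τ * (K * w l) := by
      refine sum_le_sum fun l hl => ?_
      have hτ : ψ l ≤ τ := (le_inf'_iff hJ ψ).2 fun i hi => hJψ i hi l hl
      linarith [mul_nonneg (mul_nonneg K.cast_nonneg (hw0 l (mem_sdiff.1 hl).1)) (sub_nonneg.2 hτ)]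
    _ = τ * (K * W - K * ∑ i ∈ J, w i) := by
      rw [← mul_sub, ← sum_sdiff_eq_sub hJs, mul_sum, mul_sum]
  have hJγ := mul_le_mul_of_nonneg_left (hγ J hJs hJK) (sum_nonneg hw0)
  have hsplit : K * ∑ i ∈ s, w i * ψ i
      = ∑ i ∈ J, K * w i * ψ i + ∑ l ∈ s \ J, K * w l * ψ l := by
    rw [add_comm, sum_sdiff hJs, mul_sum]
    exact sum_congr rfl fun i _ => by ring
  linarith

end TopSubset

theorem sum_Icc_sum_Icc_sub_one (ψ : ℕ → ℝ) (N : ℕ) :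
    ∑ j ∈ Icc 1 N, ∑ i ∈ Icc 1 (j - 1), ψ i = ∑ j ∈ Icc 1 N, ((N : ℝ) - j) * ψ j := by
  induction N with
  | zero => simp
  | succ N ih =>
    rw [sum_Icc_succ_top (by omega), sum_Icc_succ_top (by omega), ih, Nat.add_sub_cancel]
    push_cast
    rw [sub_self, zero_mul, add_zero, ← sum_add_distrib]
    exact sum_congr rfl fun j _ => by ring

theorem sum_Icc_add_sub (N K : ℕ) :
    ∑ j ∈ Icc 1 N, ((N : ℝ) + K - j) = N * (2 * K + N - 1) / 2 := by
  induction N with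
  | zero => simp
  | succ N ih =>
    rw [sum_Icc_succ_top (by omega)]
    push_cast
    have hstep : ∑ j ∈ Icc 1 N, ((N : ℝ) + 1 + K - j) = ∑ j ∈ Icc 1 N, ((N : ℝ) + K - j) + N := by
      have hshift : ∀ j : ℕ, (N : ℝ) + 1 + K - j = (N + K - j) + 1 := fun j => by ring
      simp_rw [hshift]
      rw [sum_add_distrib, sum_const, Nat.card_Icc]
      simp
    rw [hstep, ih]
    ring

namespace LPFeasible

variable {k K N : ℕ} {β α : ℝ} {a b c : ℕ → ℝ}

theorem one_sub_le (h : LPFeasible k K β α a b c) (hKM : K ≤ lpM k) : 1 - α ≤ β := by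
  have hsub : Icc 1 K ⊆ Icc 1 (lpM k) := Icc_subset_Icc_right hKM
  have hnonneg : 0 ≤ ∑ j ∈ Icc 1 K, (a j + c j) := sum_nonneg fun j hj =>
    add_nonneg (h.2.2.2.2.1 j (hsub hj)).1 (h.2.2.2.2.1 j (hsub hj)).2.2.2.2.1
  linarith [h.1 _ hsub (by simp)]

/-- Constraint (2), multiplied by `k₂`, summed over the first `N` items against constraint (3). -/
theorem sub_sum_mul_le (h : LPFeasible k K β α a b c) (hK : 0 < K) (hNM : N ≤ lpM k) :
    N * α - ∑ j ∈ Icc 1 N, ((N : ℝ) + K - j) * (a j + c j) ≤ K * (1 - α) := by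
  have hNM' : Icc 1 N ⊆ Icc 1 (lpM k) := Icc_subset_Icc_right hNM
  have hpoint : ∀ j ∈ Icc 1 N,
      α - ∑ i ∈ Icc 1 (j - 1), (a i + c i) - K * (a j + c j) ≤ K * b j := by
    intro j hj
    have hprefix : Icc 1 (j - 1) ⊆ Icc 1 (lpM k) :=
      (Icc_subset_Icc_right (Nat.sub_le j 1)).trans (Icc_subset_Icc_right (mem_Icc.1 (hNM' hj)).2)
    have hc : ∑ i ∈ Icc 1 (j - 1), a i ≤ ∑ i ∈ Icc 1 (j - 1), (a i + c i) :=
      sum_le_sum fun i hi => le_add_of_nonneg_right (h.2.2.2.2.1 i (hprefix hi)).2.2.2.2.1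
    have hj2 := (div_le_iff₀ (by exact_mod_cast hK : (0 : ℝ) < K)).1 (h.2.1 j (hNM' hj))
    linarith
  have hb : ∑ j ∈ Icc 1 N, b j ≤ 1 - α :=
    (sum_le_sum_of_subset_of_nonneg hNM' fun j hj _ => (h.2.2.2.2.1 j hj).2.2.1).trans h.2.2.1
  have hsum := sum_le_sum hpoint
  rw [sum_sub_distrib, sum_sub_distrib, sum_const, Nat.card_Icc, sum_Icc_sum_Icc_sub_one,
    ← mul_sum, ← mul_sum] at hsum
  have hweights : ∑ j ∈ Icc 1 N, ((N : ℝ) + K - j) * (a j + c j)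
      = ∑ j ∈ Icc 1 N, ((N : ℝ) - j) * (a j + c j) + K * ∑ j ∈ Icc 1 N, (a j + c j) := by
    rw [mul_sum, ← sum_add_distrib]
    exact sum_congr rfl fun j _ => by ring
  have hKb := mul_le_mul_of_nonneg_left hb (Nat.cast_nonneg K : (0 : ℝ) ≤ K)
  simp only [Nat.add_sub_cancel, nsmul_eq_mul] at hsum
  linarith

theorem window_bound (h : LPFeasible k K β α a b c) (hK : 0 < K) (hKN : K ≤ N)
    (hNM : N ≤ lpM k) (hN : 2 * K * ((K : ℝ) - 1) ≤ N * ((N : ℝ) - 1)) :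
    2 * K * (N * α - K * (1 - α)) ≤ N * (2 * K + N - 1) * (β - 1 + α) := by
  have hNM' : Icc 1 N ⊆ Icc 1 (lpM k) := Icc_subset_Icc_right hNM
  have hW := sum_Icc_add_sub N K
  have hmass := Finset.mul_sum_mul_le_sum_mul_of_forall_card_eq (s := Icc 1 N)
    (w := fun j => (N : ℝ) + K - j) (ψ := fun j => a j + c j) (γ := β - 1 + α) hK (by simp [hKN])
    (fun j hj => by
      have : (j : ℝ) ≤ N := by exact_mod_cast (mem_Icc.1 hj).2
      linarith)
    (fun j hj => by
      have : (1 : ℝ) ≤ j := by exact_mod_cast (mem_Icc.1 hj).1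
      rw [hW]; nlinarith)
    (fun J hJ hJK => by linarith [h.1 J (hJ.trans hNM') hJK])
  have hsum := h.sub_sum_mul_le hK hNM
  rw [hW] at hmass
  nlinarith

end LPFeasible

/-- At `t = √2 κ` the bound below is exact for every `α`; the slack `t - √2 κ ∈ [0, 1]` is
absorbed separately at the two ends `α = √2 - 1` and `α = 1` of the range, which suffices since
the bound is linear in `α`. -/
theorem add_one_sub_sqrt_two_le {κ t α γ : ℝ} (hκ : 1 ≤ κ) (ht : √2 * κ ≤ t)
    (ht' : t ≤ √2 * κ + 1) (hα : √2 - 1 ≤ α) (hα' : α ≤ 1)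
    (h : 2 * κ * (t * α - κ * (1 - α)) ≤ t * (2 * κ + t - 1) * γ) :
    α + 1 - √2 ≤ γ := by
  have hs : √2 ^ 2 = 2 := Real.sq_sqrt zero_le_two
  have hs1 := Real.one_lt_sqrt_two
  have ht1 : 1 < t := by nlinarith
  have hlow : 0 ≤ (1 - α) * (κ * (t - √2 * κ)) :=
    mul_nonneg (by linarith) (mul_nonneg (by linarith) (by linarith))
  have hhigh : 0 ≤ (α - (√2 - 1)) * (t * (√2 * κ + 1 - t)) :=
    mul_nonneg (by linarith) (mul_nonneg (by linarith) (by linarith))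
  have hinterp : (2 - √2) * (2 * κ * (t * α - κ * (1 - α)) - t * (2 * κ + t - 1) * (α + 1 - √2))
      = 2 * (√2 - 1) * ((1 - α) * (κ * (t - √2 * κ)))
        + (2 - √2) * ((α - (√2 - 1)) * (t * (√2 * κ + 1 - t))) := by
    linear_combination (κ * t - κ * t * √2 + 2 * κ ^ 2 - 2 * κ ^ 2 * α + κ * t * α) * hs
  have hgap : 0 ≤ 2 * κ * (t * α - κ * (1 - α)) - t * (2 * κ + t - 1) * (α + 1 - √2) :=
    nonneg_of_mul_nonneg_right (by rw [hinterp]; nlinarith) (by nlinarith)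
  refine le_of_mul_le_mul_left (a := t * (2 * κ + t - 1)) ?_ (by nlinarith)
  linarith

/-- there is an absolute constant `c₀ > 0` such that for all `1 ≤ k₂ ≤ k`,
every feasible solution of `LP^{k,k₂}` has `β ≥ 2 − √2 − c₀/k`. -/
theorem stmt_13 :
    ∃ c₀ : ℝ, 0 < c₀ ∧
      ∀ k k₂ : ℕ, 1 ≤ k₂ → k₂ ≤ k →
        ∀ (β α : ℝ) (a b c : ℕ → ℝ),
          LPFeasible k k₂ β α a b c →
          β ≥ 2 - Real.sqrt 2 - c₀ / (k : ℝ) := by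
  refine ⟨1, one_pos, fun k K hK hKk β α a b c h => ?_⟩
  suffices 2 - √2 ≤ β by
    have : 0 ≤ 1 / (k : ℝ) := by positivity
    linarith
  have hK' : (1 : ℝ) ≤ K := by exact_mod_cast hK
  have hKk' : (K : ℝ) ≤ k := by exact_mod_cast hKk
  have hs1 := Real.one_lt_sqrt_two
  have hs2 : √2 ^ 2 = 2 := Real.sq_sqrt zero_le_two
  set N := ⌈√2 * K⌉₊
  have hN : √2 * K ≤ N := Nat.le_ceil _
  have hN' : (N : ℝ) < √2 * K + 1 := Nat.ceil_lt_add_one (by positivity)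
  have hKN : K ≤ N := by exact_mod_cast (show (K : ℝ) ≤ N by nlinarith)
  have hNM : N ≤ lpM k := Nat.ceil_mono (by nlinarith)
  rcases le_or_gt α (√2 - 1) with hα | hα
  · linarith [h.one_sub_le (hKN.trans hNM)]
  · have hN2 : 2 * K * ((K : ℝ) - 1) ≤ N * ((N : ℝ) - 1) := by
      have hsq : √2 * K * (√2 * K - 1) = 2 * K * K - √2 * K := by
        linear_combination (K : ℝ) ^ 2 * hs2
      have hs2' : √2 ≤ 2 := by nlinarith
      nlinarith [mul_le_mul hN (sub_le_sub_right hN 1) (by nlinarith) (Nat.cast_nonneg N)]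
    have hwindow := h.window_bound hK hKN hNM hN2
    linarith [add_one_sub_sqrt_two_le hK' hN hN'.le hα.le h.2.2.2.1.2 hwindow]
end

section
/- For all real numbers α, λ, r with 0 ≤ α ≤ 1, 0 < λ ≤ 1 and 0 ≤ r ≤ 1, if 1 − α ≥ (e^{−r}·α − λ)² / (2λ), then 1 − α + (1 − e^{−r})·α + (1 − r)·λ ≥ 2 − √2. -/
/-!
Put `x = e^{-r} α`; the claim is `x ≤ √2 - 1 + (1 - r) λ`. Since `α ≥ x e^r ≥ x (1 + r + r²/2)`,
the hypothesis forces `(x - λ)² + 2λ x (1 + r + r²/2) ≤ 2λ`. When `r λ ≤ √2 - 1`, the left side is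
increasing in `x ≥ 0` and already reaches `2λ` at `x = √2 - 1 + (1 - r) λ`. When `r λ > √2 - 1`,
only `α ≤ 1` is needed: `r ≤ (√2 - 1)(1 + r + r²/2)` (the difference is `(√2 - 1)(r - √2)²/2`)
gives `x r ≤ √2 - 1 < r λ`, which suffices.
-/

open Real Set

lemma exp_neg_mul_quadratic_le_one {r : ℝ} (hr : 0 ≤ r) : exp (-r) * (1 + r + r ^ 2 / 2) ≤ 1 := by
  rw [exp_neg, inv_mul_le_iff₀ (exp_pos r), mul_one]
  exact quadratic_le_exp_of_nonneg hr

lemma le_sqrt_two_sub_one_mul_quadratic (r : ℝ) : r ≤ (√2 - 1) * (1 + r + r ^ 2 / 2) := by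
  have hs : √2 ^ 2 = 2 := sq_sqrt zero_le_two
  have hs1 : 0 ≤ √2 - 1 := by nlinarith [sqrt_nonneg 2]
  have key : (√2 - 1) * (1 + r + r ^ 2 / 2) - r = (√2 - 1) * (r - √2) ^ 2 / 2 := by
    linear_combination (r - √2 / 2 + 1 / 2) * hs
  rw [← sub_nonneg, key]
  positivity

/-- Up to the factor `2λ`, the constraint `(y - λ)²/(2λ) ≤ 1 - y e^r` of the greedy analysis, with
`e^r` replaced by its second-order Taylor lower bound. -/
noncomputable def constraintPoly (lam r y : ℝ) : ℝ := (y - lam) ^ 2 + 2 * lam * y * (1 + r + r ^ 2 / 2)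

lemma strictMonoOn_constraintPoly {lam r : ℝ} (hlam : 0 ≤ lam) (hr : 0 ≤ r) :
    StrictMonoOn (constraintPoly lam r) (Ici 0) := by
  intro a ha b _ hab
  have hfactor : constraintPoly lam r b - constraintPoly lam r a
      = (b - a) * (a + b + 2 * lam * (r + r ^ 2 / 2)) := by
    unfold constraintPoly; ring
  have hpos : 0 < (b - a) * (a + b + 2 * lam * (r + r ^ 2 / 2)) := by
    have : 0 ≤ 2 * lam * (r + r ^ 2 / 2) := by positivity
    exact mul_pos (sub_pos.2 hab) (by linarith [mem_Ici.1 ha])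
  linarith

lemma two_mul_le_constraintPoly {lam r : ℝ} (hlam : 0 ≤ lam) (hr : r * lam ≤ √2 - 1) :
    2 * lam ≤ constraintPoly lam r (√2 - 1 + (1 - r) * lam) := by
  have hs : √2 ^ 2 = 2 := sq_sqrt zero_le_two
  have key : constraintPoly lam r (√2 - 1 + (1 - r) * lam) - 2 * lam
      = (2 * lam - (2 - √2)) ^ 2 / 2 + lam * r ^ 2 * (√2 - 1 - r * lam) := by
    unfold constraintPoly; linear_combination (1 / 2 : ℝ) * hs
  rw [← sub_nonneg, key]
  have := sub_nonneg.2 hr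
  positivity

section

variable {x lam r : ℝ}

lemma le_of_constraintPoly_le (hx : 0 ≤ x) (hlam : 0 ≤ lam) (hr0 : 0 ≤ r)
    (hsmall : r * lam ≤ √2 - 1) (h : constraintPoly lam r x ≤ 2 * lam) :
    x ≤ √2 - 1 + (1 - r) * lam := by
  have hB : 0 ≤ √2 - 1 + (1 - r) * lam := by linarith
  exact (strictMonoOn_constraintPoly hlam hr0).le_iff_le hx hB |>.1
    (h.trans (two_mul_le_constraintPoly hlam hsmall))

lemma le_of_mul_quadratic_le_one (hx : 0 ≤ x) (hr0 : 0 ≤ r) (hr1 : r ≤ 1)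
    (hx1 : x * (1 + r + r ^ 2 / 2) ≤ 1) (hlarge : √2 - 1 < r * lam) :
    x ≤ √2 - 1 + (1 - r) * lam := by
  have hs : 1 < √2 := one_lt_sqrt_two
  have hr : 0 < r := lt_of_le_of_ne hr0 fun h ↦ by subst h; linarith
  have hxr : x * r ≤ √2 - 1 := by
    nlinarith [mul_le_mul_of_nonneg_left (le_sqrt_two_sub_one_mul_quadratic r) hx]
  have : x * r ≤ (√2 - 1 + (1 - r) * lam) * r := by
    nlinarith [mul_le_mul_of_nonneg_left hlarge.le (sub_nonneg.2 hr1)]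
  exact le_of_mul_le_mul_right this hr

end

theorem stmt_15_general (α lam r : ℝ)
    (hα0 : 0 ≤ α) (hα1 : α ≤ 1)
    (hlam0 : 0 < lam)
    (hr0 : 0 ≤ r) (hr1 : r ≤ 1)
    (h : 1 - α ≥ (Real.exp (-r) * α - lam) ^ 2 / (2 * lam)) :
    1 - α + (1 - Real.exp (-r)) * α + (1 - r) * lam ≥ 2 - Real.sqrt 2 := by
  set x := exp (-r) * α
  have hx : 0 ≤ x := by positivity
  have hxα : x * (1 + r + r ^ 2 / 2) ≤ α := by
    calc x * (1 + r + r ^ 2 / 2) = exp (-r) * (1 + r + r ^ 2 / 2) * α := by ring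
      _ ≤ 1 * α := by gcongr; exact exp_neg_mul_quadratic_le_one hr0
      _ = α := one_mul α
  have hcon : (x - lam) ^ 2 ≤ 2 * lam * (1 - α) := by
    rw [ge_iff_le, div_le_iff₀ (by positivity)] at h; linarith
  suffices x ≤ √2 - 1 + (1 - r) * lam by linarith
  rcases le_or_gt (r * lam) (√2 - 1) with hsmall | hlarge
  · refine le_of_constraintPoly_le hx hlam0.le hr0 hsmall ?_
    unfold constraintPoly; nlinarith
  · exact le_of_mul_quadratic_le_one hx hr0 hr1 (hxα.trans hα1) hlarge

/-- for `0 ≤ α ≤ 1`, `0 < λ ≤ 1`, `0 ≤ r ≤ 1`, if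
`1 − α ≥ (e^{−r}·α − λ)²/(2λ)` then `1 − α + (1 − e^{−r})·α + (1 − r)·λ ≥ 2 − √2`. -/
theorem stmt_15 (α lam r : ℝ)
    (hα0 : 0 ≤ α) (hα1 : α ≤ 1)
    (hlam0 : 0 < lam) (hlam1 : lam ≤ 1)
    (hr0 : 0 ≤ r) (hr1 : r ≤ 1)
    (h : 1 - α ≥ (Real.exp (-r) * α - lam) ^ 2 / (2 * lam)) :
    1 - α + (1 - Real.exp (-r)) * α + (1 - r) * lam ≥ 2 - Real.sqrt 2 :=
  stmt_15_general α lam r hα0 hα1 hlam0 hr0 hr1 h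
end
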